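/- arXiv:1901.09191 — 2 statements merged into one kernel-verified Lean document; each statement's English description precedes it below -/
import Mathlib

section
/- Let B(m,n), 0 ≤ m ≤ n, be a cocycle of nonnegative matrices (B(p,n) = B(m,n)B(p,m)) with all entries nonnegative integers and ‖B(m,n)‖ nondecreasing in n and ≥ 1, satisfying: (i) condition (a') along a sequence (n_k), i.e. for all τ > 0, ‖B(n_{k−1},n_k)‖ ≤ C_τ ‖B(0,n_{k−1})‖^τ; and (ii) the cone-distortion estimate of Lemma l1 at each accelerated step: for a fixed positive vector v and w := B(0,n_ℓ)v, max_α w_α ≤ K ‖B(n_{ℓ−1},n_ℓ)‖ min_α w_α. Then for every τ > 0 there exists C(τ) > 0 such that for all 0 ≤ ℓ ≤ k: ‖B(n_0,n_k)‖ ≤ ‖B(n_0,n_ℓ)‖ · ‖B(n_ℓ,n_k)‖ ≤ C(τ) ‖B(n_0,n_k)‖^{1+τ}. -/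
/-- `‖B‖ = max_α Σ_β |B_{αβ}|`. -/
noncomputable def rowNorm {A : Type*} [Fintype A] (B : Matrix A A ℝ) : ℝ :=
  ⨆ α, ∑ β, |B α β|

lemma sum_le_rowNorm {A : Type*} [Fintype A] [Nonempty A] (B : Matrix A A ℝ) (α : A) :
    ∑ β, |B α β| ≤ rowNorm B := by
  unfold rowNorm
  exact le_ciSup ((Set.finite_range (fun α => ∑ β, |B α β|)).bddAbove) α

lemma rowNorm_le {A : Type*} [Fintype A] [Nonempty A] {B : Matrix A A ℝ} {c : ℝ}
    (h : ∀ α, ∑ β, |B α β| ≤ c) : rowNorm B ≤ c := by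
  unfold rowNorm
  exact ciSup_le h

lemma rowNorm_nonneg {A : Type*} [Fintype A] [Nonempty A] (B : Matrix A A ℝ) :
    0 ≤ rowNorm B :=
  le_trans (Finset.sum_nonneg fun _ _ => abs_nonneg _)
    (sum_le_rowNorm B (Classical.arbitrary A))

lemma exists_rowNorm_eq {A : Type*} [Fintype A] [Nonempty A] (B : Matrix A A ℝ) :
    ∃ α, rowNorm B = ∑ β, |B α β| := by
  obtain ⟨α, hα⟩ := Finite.exists_max (fun α => ∑ β, |B α β|)
  exact ⟨α, le_antisymm (rowNorm_le hα) (sum_le_rowNorm B α)⟩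

lemma rowNorm_mul_le {A : Type*} [Fintype A] [Nonempty A] (B C : Matrix A A ℝ) :
    rowNorm (B * C) ≤ rowNorm B * rowNorm C := by
  apply rowNorm_le
  intro α
  have h1 : ∀ β, |(B * C) α β| ≤ ∑ γ, |B α γ| * |C γ β| := by
    intro β
    rw [Matrix.mul_apply]
    refine le_trans (Finset.abs_sum_le_sum_abs _ _) ?_
    exact le_of_eq (Finset.sum_congr rfl fun γ _ => abs_mul _ _)
  calc ∑ β, |(B * C) α β| ≤ ∑ β, ∑ γ, |B α γ| * |C γ β| :=
        Finset.sum_le_sum fun β _ => h1 β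
    _ = ∑ γ, |B α γ| * ∑ β, |C γ β| := by
        rw [Finset.sum_comm]
        exact Finset.sum_congr rfl fun γ _ => (Finset.mul_sum _ _ _).symm
    _ ≤ ∑ γ, |B α γ| * rowNorm C :=
        Finset.sum_le_sum fun γ _ =>
          mul_le_mul_of_nonneg_left (sum_le_rowNorm C γ) (abs_nonneg _)
    _ = (∑ γ, |B α γ|) * rowNorm C := (Finset.sum_mul _ _ _).symm
    _ ≤ rowNorm B * rowNorm C :=
        mul_le_mul_of_nonneg_right (sum_le_rowNorm B α) (rowNorm_nonneg C)

lemma sum_le_rowNorm' {A : Type*} [Fintype A] [Nonempty A] {B : Matrix A A ℝ}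
    (hB : ∀ α β, 0 ≤ B α β) (α : A) : ∑ β, B α β ≤ rowNorm B :=
  le_trans (le_of_eq (Finset.sum_congr rfl fun β _ => (abs_of_nonneg (hB α β)).symm))
    (sum_le_rowNorm B α)

lemma rowNorm_one {A : Type*} [Fintype A] [DecidableEq A] [Nonempty A] :
    rowNorm (1 : Matrix A A ℝ) = 1 := by
  have h : ∀ α : A, ∑ β, |(1 : Matrix A A ℝ) α β| = 1 := by
    intro α
    rw [Finset.sum_eq_single α]
    · simp [Matrix.one_apply]
    · intro b _ hb
      simp [Matrix.one_apply, (Ne.symm hb)]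
    · intro h; exact absurd (Finset.mem_univ α) h
  exact le_antisymm (rowNorm_le fun α => le_of_eq (h α))
    (le_trans (le_of_eq (h (Classical.arbitrary A)).symm)
      (sum_le_rowNorm _ (Classical.arbitrary A)))

/-- Proposition p5: quasi-multiplicativity of the norms of an absolute
Roth-type cocycle along its accelerated sequence (n_k): assuming condition (a') and the
cone-distortion estimate for a fixed positive vector `v`, one has
`‖B(n_0,n_k)‖ ≤ ‖B(n_0,n_ℓ)‖‖B(n_ℓ,n_k)‖ ≤ C(τ)‖B(n_0,n_k)‖^{1+τ}`. -/
theorem stmt_9 {A : Type*} [Fintype A] [DecidableEq A] [Nonempty A]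
    (Bc : ℕ → ℕ → Matrix A A ℝ)
    (hnonneg : ∀ m n α β, 0 ≤ Bc m n α β)
    (hint : ∀ m n α β, ∃ z : ℕ, Bc m n α β = (z : ℝ))
    (hid : ∀ n, Bc n n = 1)
    (hcoc : ∀ p m n, p ≤ m → m ≤ n → Bc p n = Bc m n * Bc p m)
    (hnorm1 : ∀ m n, m ≤ n → 1 ≤ rowNorm (Bc m n))
    (hnormmono : ∀ m n n', m ≤ n → n ≤ n' → rowNorm (Bc m n) ≤ rowNorm (Bc m n'))
    (nk : ℕ → ℕ) (hnk0 : nk 0 = 0) (hnkmono : StrictMono nk)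
    -- condition (a')
    (ha' : ∀ τ : ℝ, 0 < τ → ∃ C : ℝ, 0 < C ∧ ∀ k, 1 ≤ k →
      rowNorm (Bc (nk (k - 1)) (nk k)) ≤ C * rowNorm (Bc 0 (nk (k - 1))) ^ τ)
    -- cone-distortion estimate (Lemma l1) at each accelerated step
    (v : A → ℝ) (hv : ∀ α, 0 < v α)
    (K : ℝ) (hK : 0 < K)
    (hdist : ∀ ℓ, 1 ≤ ℓ → ∀ α β,
      (Bc 0 (nk ℓ)).mulVec v α ≤
        K * rowNorm (Bc (nk (ℓ - 1)) (nk ℓ)) * (Bc 0 (nk ℓ)).mulVec v β) :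
    ∀ τ : ℝ, 0 < τ → ∃ C : ℝ, 0 < C ∧ ∀ ℓ k : ℕ, ℓ ≤ k →
      rowNorm (Bc (nk 0) (nk k)) ≤
        rowNorm (Bc (nk 0) (nk ℓ)) * rowNorm (Bc (nk ℓ) (nk k)) ∧
      rowNorm (Bc (nk 0) (nk ℓ)) * rowNorm (Bc (nk ℓ) (nk k)) ≤
        C * rowNorm (Bc (nk 0) (nk k)) ^ (1 + τ) := by
  intro τ hτ
  obtain ⟨Cτ, hCτpos, haτ⟩ := ha' τ hτ
  obtain ⟨βM, hβM⟩ := Finite.exists_max v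
  obtain ⟨βm, hβm⟩ := Finite.exists_min v
  have hvm : 0 < v βm := hv βm
  refine ⟨max 1 (K * Cτ * (v βM / v βm)), lt_of_lt_of_le one_pos (le_max_left _ _), ?_⟩
  intro ℓ k hℓk
  have hmono := hnkmono.monotone
  have h0ℓ : nk 0 ≤ nk ℓ := hmono (Nat.zero_le ℓ)
  have hℓk' : nk ℓ ≤ nk k := hmono hℓk
  have hcoc1 : Bc (nk 0) (nk k) = Bc (nk ℓ) (nk k) * Bc (nk 0) (nk ℓ) :=
    hcoc _ _ _ h0ℓ hℓk'
  have hfirst : rowNorm (Bc (nk 0) (nk k)) ≤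
      rowNorm (Bc (nk 0) (nk ℓ)) * rowNorm (Bc (nk ℓ) (nk k)) := by
    rw [hcoc1]
    exact (rowNorm_mul_le _ _).trans_eq (mul_comm _ _)
  refine ⟨hfirst, ?_⟩
  rw [hnk0]
  have hZ1 : 1 ≤ rowNorm (Bc 0 (nk k)) := hnorm1 0 (nk k) (Nat.zero_le _)
  have hZpos : 0 < rowNorm (Bc 0 (nk k)) := lt_of_lt_of_le one_pos hZ1
  have hZτ : rowNorm (Bc 0 (nk k)) ^ (1 + τ) =
      rowNorm (Bc 0 (nk k)) * rowNorm (Bc 0 (nk k)) ^ τ := by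
    rw [Real.rpow_add hZpos, Real.rpow_one]
  have hZτpos : 0 < rowNorm (Bc 0 (nk k)) ^ (1 + τ) := Real.rpow_pos_of_pos hZpos _
  rcases Nat.eq_zero_or_pos ℓ with hℓ0 | hℓ1
  · subst hℓ0
    rw [hnk0, hid 0, rowNorm_one, one_mul]
    calc rowNorm (Bc 0 (nk k)) ≤ rowNorm (Bc 0 (nk k)) ^ (1 + τ) := by
          nth_rewrite 1 [← Real.rpow_one (rowNorm (Bc 0 (nk k)))]
          exact Real.rpow_le_rpow_of_exponent_le hZ1 (by linarith)
      _ ≤ max 1 (K * Cτ * (v βM / v βm)) * rowNorm (Bc 0 (nk k)) ^ (1 + τ) := by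
          nth_rewrite 1 [← one_mul (rowNorm (Bc 0 (nk k)) ^ (1 + τ))]
          exact mul_le_mul_of_nonneg_right (le_max_left _ _) hZτpos.le
  · -- ℓ ≥ 1
    set w : A → ℝ := (Bc 0 (nk ℓ)).mulVec v with hw
    have hwapp : ∀ α, w α = ∑ β, Bc 0 (nk ℓ) α β * v β := by
      intro α; simp [hw, Matrix.mulVec, dotProduct]
    have hwnn : ∀ α, 0 ≤ w α := by
      intro α; rw [hwapp]
      exact Finset.sum_nonneg fun β _ => mul_nonneg (hnonneg _ _ _ _) (hv β).le
    obtain ⟨αM, hαM⟩ := Finite.exists_max w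
    obtain ⟨αm, hαm⟩ := Finite.exists_min w
    set X := rowNorm (Bc 0 (nk ℓ)) with hX
    set Y := rowNorm (Bc (nk ℓ) (nk k)) with hY
    set Z := rowNorm (Bc 0 (nk k)) with hZdef
    set N := rowNorm (Bc (nk (ℓ - 1)) (nk ℓ)) with hN
    have hX1 : 1 ≤ X := hnorm1 0 (nk ℓ) (Nat.zero_le _)
    have hN1 : 1 ≤ N := hnorm1 _ _ (hmono (Nat.sub_le ℓ 1))
    have hNpos : 0 < N := lt_of_lt_of_le one_pos hN1
    -- key1: X * v βm ≤ w αM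
    have key1 : X * v βm ≤ w αM := by
      obtain ⟨α0, hα0⟩ := exists_rowNorm_eq (Bc 0 (nk ℓ))
      have h1 : X * v βm ≤ w α0 := by
        rw [hX, hα0, hwapp α0, Finset.sum_mul]
        refine Finset.sum_le_sum fun β _ => ?_
        rw [abs_of_nonneg (hnonneg _ _ _ _)]
        exact mul_le_mul_of_nonneg_left (hβm β) (hnonneg _ _ _ _)
      exact h1.trans (hαM α0)
    -- key2: Y * w αm ≤ Z * v βM
    have key2 : Y * w αm ≤ Z * v βM := by
      obtain ⟨α1, hα1⟩ := exists_rowNorm_eq (Bc (nk ℓ) (nk k))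
      have e : (Bc (nk ℓ) (nk k)).mulVec w = (Bc 0 (nk k)).mulVec v := by
        rw [hw, Matrix.mulVec_mulVec, ← hcoc 0 (nk ℓ) (nk k) (Nat.zero_le _) hℓk']
      calc Y * w αm = ∑ β, |Bc (nk ℓ) (nk k) α1 β| * w αm := by
            rw [hY, hα1, Finset.sum_mul]
        _ ≤ ∑ β, Bc (nk ℓ) (nk k) α1 β * w β := by
            refine Finset.sum_le_sum fun β _ => ?_
            rw [abs_of_nonneg (hnonneg _ _ _ _)]
            exact mul_le_mul_of_nonneg_left (hαm β) (hnonneg _ _ _ _)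
        _ = (Bc (nk ℓ) (nk k)).mulVec w α1 := by
            simp [Matrix.mulVec, dotProduct]
        _ = (Bc 0 (nk k)).mulVec v α1 := by rw [e]
        _ = ∑ β, Bc 0 (nk k) α1 β * v β := by
            simp [Matrix.mulVec, dotProduct]
        _ ≤ ∑ β, Bc 0 (nk k) α1 β * v βM :=
            Finset.sum_le_sum fun β _ =>
              mul_le_mul_of_nonneg_left (hβM β) (hnonneg _ _ _ _)
        _ = (∑ β, Bc 0 (nk k) α1 β) * v βM := (Finset.sum_mul _ _ _).symm
        _ ≤ Z * v βM :=
            mul_le_mul_of_nonneg_right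
              (sum_le_rowNorm' (fun α β => hnonneg _ _ α β) α1) (hv βM).le
    -- key3: distortion
    have key3 : w αM ≤ K * N * w αm := by
      have h := hdist ℓ hℓ1 αM αm
      rw [← hw] at h
      exact h
    -- w αm is positive
    have hwpos : 0 < w αm := by
      have h0 : 0 < K * N * w αm :=
        lt_of_lt_of_le (mul_pos (lt_of_lt_of_le one_pos hX1) hvm) (key1.trans key3)
      have hKN : 0 < K * N := mul_pos hK hNpos
      nlinarith [hwnn αm]
    -- combine
    have hchain : (X * Y * v βm) * w αm ≤ (K * N * v βM * Z) * w αm := by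
      calc (X * Y * v βm) * w αm = (X * v βm) * (Y * w αm) := by ring
        _ ≤ w αM * (Z * v βM) :=
            mul_le_mul key1 key2 (mul_nonneg (rowNorm_nonneg _) (hwnn αm)) (hwnn αM)
        _ ≤ (K * N * w αm) * (Z * v βM) :=
            mul_le_mul_of_nonneg_right key3
              (mul_nonneg hZpos.le (hv βM).le)
        _ = (K * N * v βM * Z) * w αm := by ring
    have h4 : X * Y * v βm ≤ K * N * v βM * Z := le_of_mul_le_mul_right hchain hwpos
    -- bound N
    have hNle : N ≤ Cτ * Z ^ τ := by
      refine (haτ ℓ hℓ1).trans ?_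
      refine mul_le_mul_of_nonneg_left ?_ hCτpos.le
      refine Real.rpow_le_rpow (rowNorm_nonneg _) ?_ hτ.le
      exact hnormmono 0 (nk (ℓ - 1)) (nk k) (Nat.zero_le _)
        (hmono ((Nat.sub_le ℓ 1).trans hℓk))
    have hN' : K * N * v βM * Z ≤ K * (Cτ * Z ^ τ) * v βM * Z := by
      have h := mul_le_mul_of_nonneg_right (mul_le_mul_of_nonneg_left hNle hK.le)
        (mul_nonneg (hv βM).le hZpos.le)
      calc K * N * v βM * Z = (K * N) * (v βM * Z) := by ring
        _ ≤ (K * (Cτ * Z ^ τ)) * (v βM * Z) := h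
        _ = K * (Cτ * Z ^ τ) * v βM * Z := by ring
    have heq : (K * Cτ * (v βM / v βm) * Z ^ (1 + τ)) * v βm
        = K * (Cτ * Z ^ τ) * v βM * Z := by
      rw [hZτ]
      field_simp
    have h5 : (X * Y) * v βm ≤ (K * Cτ * (v βM / v βm) * Z ^ (1 + τ)) * v βm := by
      rw [heq]
      exact h4.trans hN'
    have h6 : X * Y ≤ K * Cτ * (v βM / v βm) * Z ^ (1 + τ) :=
      le_of_mul_le_mul_right h5 hvm
    exact h6.trans (mul_le_mul_of_nonneg_right (le_max_right _ _) hZτpos.le)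
end

section
/- Under the dual Roth type matrix growth condition (a) alone — namely that for every ε > 0 there exists C(ε) with ‖B(n̂_{k−1}, n̂_k)‖ ≤ C(ε)‖B(n̂_k,0)‖^ε for the accelerated backward times, and completeness of every block of 2d−3 consecutive accelerated steps — the following quasi-multiplicativity holds: for every ε > 0 there exists C'(ε) > 0 such that for all n ≤ m ≤ 0, ‖B(n,m)‖ · ‖B(m,0)‖ ≤ C'(ε) ‖B(n,0)‖^{1+ε}, where ‖B‖ = Σ_{αβ}|B_{αβ}|. -/
/-- `‖B‖ = Σ_{α,β} |B_{αβ}|`. -/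
noncomputable def sumNorm {A : Type*} [Fintype A] (B : Matrix A A ℝ) : ℝ :=
  ∑ α, ∑ β, |B α β|

section helpers
variable {A : Type*} [Fintype A]

lemma sumNorm_nonneg (B : Matrix A A ℝ) : 0 ≤ sumNorm B := by
  apply Finset.sum_nonneg; intro α _; apply Finset.sum_nonneg; intro β _; exact abs_nonneg _

lemma sumNorm_of_nonneg {B : Matrix A A ℝ} (h : ∀ α β, 0 ≤ B α β) :
    sumNorm B = ∑ α, ∑ β, B α β := by
  unfold sumNorm
  exact Finset.sum_congr rfl fun α _ => Finset.sum_congr rfl fun β _ => abs_of_nonneg (h α β)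

lemma sumNorm_mono {X Y : Matrix A A ℝ} (hX : ∀ α β, 0 ≤ X α β)
    (hle : ∀ α β, X α β ≤ Y α β) : sumNorm X ≤ sumNorm Y := by
  rw [sumNorm_of_nonneg hX, sumNorm_of_nonneg (fun α β => (hX α β).trans (hle α β))]
  exact Finset.sum_le_sum fun α _ => Finset.sum_le_sum fun β _ => hle α β

lemma sumNorm_mul_le {X Y : Matrix A A ℝ} (hX : ∀ α β, 0 ≤ X α β)
    (hY : ∀ α β, 0 ≤ Y α β) : sumNorm (X * Y) ≤ sumNorm X * sumNorm Y := by
  rw [sumNorm_of_nonneg (fun α β => by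
    simpa [Matrix.mul_apply] using Finset.sum_nonneg fun γ _ => mul_nonneg (hX α γ) (hY γ β)),
    sumNorm_of_nonneg hX]
  calc ∑ α, ∑ β, (X * Y) α β
      = ∑ α, ∑ γ, X α γ * (∑ β, Y γ β) := by
        simp only [Matrix.mul_apply, Finset.mul_sum]
        rw [Finset.sum_congr rfl fun α _ => Finset.sum_comm]
    _ ≤ ∑ α, ∑ γ, X α γ * sumNorm Y := by
        apply Finset.sum_le_sum; intro α _; apply Finset.sum_le_sum; intro γ _
        apply mul_le_mul_of_nonneg_left _ (hX α γ)
        rw [sumNorm_of_nonneg hY]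
        exact Finset.single_le_sum (f := fun γ => ∑ β, Y γ β)
          (fun i _ => Finset.sum_nonneg fun β _ => hY i β) (Finset.mem_univ γ)
    _ = (∑ α, ∑ γ, X α γ) * sumNorm Y := by rw [Finset.sum_mul]; simp [Finset.sum_mul]

lemma sumNorm_pos_middle {Y X Z : Matrix A A ℝ} (hY : ∀ α β, 0 ≤ Y α β)
    (hX : ∀ α β, 1 ≤ X α β) (hZ : ∀ α β, 0 ≤ Z α β) :
    sumNorm Y * sumNorm Z ≤ sumNorm (Y * X * Z) := by
  have hXn : ∀ α β, 0 ≤ X α β := fun α β => zero_le_one.trans (hX α β)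
  have hYX : ∀ α β, 0 ≤ (Y * X) α β := fun α β => by
    simpa [Matrix.mul_apply] using Finset.sum_nonneg fun γ _ => mul_nonneg (hY α γ) (hXn γ β)
  have hYXZ : ∀ α β, 0 ≤ (Y * X * Z) α β := fun α β => by
    simpa [Matrix.mul_apply] using Finset.sum_nonneg fun γ _ => mul_nonneg (hYX α γ) (hZ γ β)
  rw [sumNorm_of_nonneg hY, sumNorm_of_nonneg hZ, sumNorm_of_nonneg hYXZ]
  have key : ∀ α δ, (∑ β, Y α β) * (∑ γ, Z γ δ) ≤ (Y * X * Z) α δ := by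
    intro α δ
    have : (Y * X * Z) α δ = ∑ γ, (∑ β, Y α β * X β γ) * Z γ δ := by
      simp [Matrix.mul_apply]
    rw [this, Finset.mul_sum]
    apply Finset.sum_le_sum; intro γ _
    apply mul_le_mul_of_nonneg_right _ (hZ γ δ)
    apply Finset.sum_le_sum; intro β _
    nth_rewrite 1 [← mul_one (Y α β)]
    exact mul_le_mul_of_nonneg_left (hX β γ) (hY α β)
  calc (∑ α, ∑ β, Y α β) * (∑ γ, ∑ δ, Z γ δ)
      = ∑ α, ∑ δ, (∑ β, Y α β) * (∑ γ, Z γ δ) := by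
        rw [Finset.sum_mul]
        refine Finset.sum_congr rfl fun α _ => ?_
        rw [← Finset.mul_sum, Finset.sum_comm]
    _ ≤ ∑ α, ∑ δ, (Y * X * Z) α δ :=
        Finset.sum_le_sum fun α _ => Finset.sum_le_sum fun δ _ => key α δ

end helpers

/-- under the dual Roth type matrix growth condition (a) alone (together
with completeness of blocks of 2d-3 consecutive accelerated backward steps), the
backward cocycle is quasi-multiplicative:
`‖B(n,m)‖ ‖B(m,0)‖ ≤ C'(ε) ‖B(n,0)‖^{1+ε}` for all `n ≤ m ≤ 0`. -/
theorem stmt_13 {A : Type*} [Fintype A] [DecidableEq A] [Nonempty A]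
    (d : ℕ) (hd : 2 ≤ d) (hcard : Fintype.card A = d)
    (Bc : ℤ → ℤ → Matrix A A ℝ)
    (hnonneg : ∀ m n α β, 0 ≤ Bc m n α β)
    (hint : ∀ m n α β, ∃ z : ℕ, Bc m n α β = (z : ℝ))
    (hid : ∀ n, Bc n n = 1)
    (hcoc : ∀ p m n : ℤ, p ≤ m → m ≤ n → n ≤ 0 → Bc p n = Bc m n * Bc p m)
    (hmono : ∀ n n' m m' : ℤ, n' ≤ n → n ≤ m → m ≤ m' → m' ≤ 0 →
      ∀ α β, Bc n m α β ≤ Bc n' m' α β)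
    (hatn : ℕ → ℤ) (h0 : hatn 0 = 0) (hdec : StrictAnti hatn)
    (hpos : ∀ j : ℕ, ∀ α β, 1 ≤ Bc (hatn (j + (2 * d - 3))) (hatn j) α β)
    (ha : ∀ ε : ℝ, 0 < ε → ∃ C : ℝ, 0 < C ∧ ∀ j : ℕ,
      sumNorm (Bc (hatn (j + 1)) (hatn j)) ≤ C * sumNorm (Bc (hatn j) 0) ^ ε) :
    ∀ ε : ℝ, 0 < ε → ∃ C' : ℝ, 0 < C' ∧ ∀ n m : ℤ, n ≤ m → m ≤ 0 →
      sumNorm (Bc n m) * sumNorm (Bc m 0) ≤ C' * sumNorm (Bc n 0) ^ (1 + ε) := by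
  classical
  intro ε hε
  set K := 2 * d - 3 with hKdef
  have hK1 : 1 ≤ K := by omega
  have hatn_le : ∀ j : ℕ, hatn j ≤ 0 := fun j => by
    calc hatn j ≤ hatn 0 := hdec.antitone (Nat.zero_le j)
      _ = 0 := h0
  have hatn_lin : ∀ j : ℕ, hatn j ≤ -(j : ℤ) := by
    intro j; induction j with
    | zero => simp [h0]
    | succ k ih =>
      have h : hatn (k + 1) < hatn k := hdec (by omega)
      push_cast
      omega
  -- norms are at least 1
  have hone : ∀ n m : ℤ, n ≤ m → m ≤ 0 → (1 : ℝ) ≤ sumNorm (Bc n m) := by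
    intro n m hnm hm0
    obtain ⟨α⟩ := (inferInstance : Nonempty A)
    have h1 : (1 : ℝ) ≤ Bc n m α α := by
      have h2 := hmono m n m m hnm le_rfl le_rfl hm0 α α
      rw [hid m] at h2
      simpa using h2
    calc (1 : ℝ) ≤ Bc n m α α := h1
      _ ≤ ∑ β, Bc n m α β :=
        Finset.single_le_sum (fun β _ => hnonneg n m α β) (Finset.mem_univ α)
      _ ≤ ∑ α', ∑ β, Bc n m α' β :=
        Finset.single_le_sum (f := fun α' => ∑ β, Bc n m α' β)
          (fun i _ => Finset.sum_nonneg fun β _ => hnonneg n m i β) (Finset.mem_univ α)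
      _ = sumNorm (Bc n m) := (sumNorm_of_nonneg (fun a b => hnonneg n m a b)).symm
  set ε' : ℝ := ε / (K + 1) with hε'def
  have hε' : 0 < ε' := by positivity
  obtain ⟨C, hCpos, hCa⟩ := ha ε' hε'
  set C2 := max C 1 with hC2def
  have hC2 : (1 : ℝ) ≤ C2 := le_max_right _ _
  have hCa2 : ∀ j : ℕ, sumNorm (Bc (hatn (j + 1)) (hatn j)) ≤
      C2 * sumNorm (Bc (hatn j) 0) ^ ε' := fun j =>
    (hCa j).trans (mul_le_mul_of_nonneg_right (le_max_left _ _)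
      (Real.rpow_nonneg (sumNorm_nonneg _) _))
  have hd1 : (1 : ℝ) ≤ (d : ℝ) := by exact_mod_cast Nat.one_le_of_lt hd
  refine ⟨(d : ℝ) * C2 ^ (K + 1), by positivity, ?_⟩
  intro n m hnm hm0
  set N := sumNorm (Bc n 0) with hNdef
  have hN1 : (1 : ℝ) ≤ N := hone n 0 (hnm.trans hm0) le_rfl
  have hN0 : (0 : ℝ) < N := lt_of_lt_of_le one_pos hN1
  have hNε : N ^ ε * N = N ^ (1 + ε) := by
    rw [add_comm, Real.rpow_add hN0, Real.rpow_one]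
  have hfin : ∀ L : ℝ, L ≤ C2 ^ (K + 1) * N ^ ε → L * N ≤ (d : ℝ) * C2 ^ (K + 1) * N ^ (1 + ε) := by
    intro L hL
    have h1 : L * N ≤ C2 ^ (K + 1) * N ^ ε * N :=
      mul_le_mul_of_nonneg_right hL (le_of_lt hN0)
    have h2 : C2 ^ (K + 1) * N ^ ε * N = C2 ^ (K + 1) * N ^ (1 + ε) := by
      rw [mul_assoc, hNε]
    have h3 : C2 ^ (K + 1) * N ^ (1 + ε) ≤ (d : ℝ) * C2 ^ (K + 1) * N ^ (1 + ε) := by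
      have hb : (0 : ℝ) ≤ C2 ^ (K + 1) * N ^ (1 + ε) := by positivity
      nlinarith
    linarith [h1, h2 ▸ h1]
  rcases hm0.lt_or_eq with hmlt | hmeq
  swap
  · -- m = 0
    subst hmeq
    rw [hid 0]
    have hId : sumNorm (1 : Matrix A A ℝ) = (d : ℝ) := by
      rw [← hcard, sumNorm_of_nonneg (fun α β => by
        by_cases h : α = β <;> simp [Matrix.one_apply, h])]
      simp [Matrix.one_apply]
    rw [hId, ← hNdef]
    have hNe : N ≤ N ^ (1 + ε) := by
      nth_rewrite 1 [← Real.rpow_one N]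
      exact Real.rpow_le_rpow_of_exponent_le hN1 (by linarith)
    have hC2p : (1 : ℝ) ≤ C2 ^ (K + 1) := one_le_pow₀ hC2
    have hXnn : (0 : ℝ) ≤ N ^ (1 + ε) := Real.rpow_nonneg (le_of_lt hN0) (1 + ε)
    have hdnn : (0 : ℝ) ≤ (d : ℝ) := by linarith
    have step1 : N * (d : ℝ) ≤ (d : ℝ) * N ^ (1 + ε) := by
      rw [mul_comm]
      exact mul_le_mul_of_nonneg_left hNe hdnn
    have step2 : (d : ℝ) * N ^ (1 + ε) ≤ (d : ℝ) * C2 ^ (K + 1) * N ^ (1 + ε) := by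
      have h := mul_le_mul_of_nonneg_right (mul_le_mul_of_nonneg_left hC2p hdnn) hXnn
      simpa using h
    linarith
  -- main case : m < 0
  have hex : ∀ x : ℤ, ∃ j : ℕ, hatn j ≤ x := by
    intro x
    refine ⟨(-x).toNat, ?_⟩
    have := hatn_lin (-x).toNat
    omega
  set j := Nat.find (hex m) with hjdef
  have hjm : hatn j ≤ m := Nat.find_spec (hex m)
  have hjmin : ∀ i, i < j → m < hatn i := fun i hi =>
    lt_of_not_ge (Nat.find_min (hex m) hi)
  have hj1 : 1 ≤ j := by
    rcases Nat.eq_zero_or_pos j with h | h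
    · exfalso; rw [h, h0] at hjm; omega
    · exact h
  have hmj1 : m ≤ hatn (j - 1) := le_of_lt (hjmin (j - 1) (by omega))
  -- key estimate on blocks of accelerated steps
  have key : ∀ a b : ℕ, a < b → b - a ≤ K + 1 → (∀ i, a ≤ i → i < b → n ≤ hatn i) →
      sumNorm (Bc (hatn b) (hatn a)) ≤ C2 ^ (K + 1) * N ^ ε := by
    intro a b hab hba hni
    have tel : ∀ b : ℕ, a < b → sumNorm (Bc (hatn b) (hatn a)) ≤
        ∏ i ∈ Finset.Ico a b, sumNorm (Bc (hatn (i + 1)) (hatn i)) := by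
      intro b hab
      induction b with
      | zero => omega
      | succ c ih =>
        rcases Nat.lt_succ_iff_lt_or_eq.mp hab with h | h
        · have hcoc' : Bc (hatn (c + 1)) (hatn a) =
              Bc (hatn c) (hatn a) * Bc (hatn (c + 1)) (hatn c) :=
            hcoc (hatn (c + 1)) (hatn c) (hatn a)
              (hdec.antitone (Nat.le_succ c)) (hdec.antitone (le_of_lt h)) (hatn_le a)
          rw [hcoc', Finset.prod_Ico_succ_top (le_of_lt h)]
          calc sumNorm (Bc (hatn c) (hatn a) * Bc (hatn (c + 1)) (hatn c))
              ≤ sumNorm (Bc (hatn c) (hatn a)) * sumNorm (Bc (hatn (c + 1)) (hatn c)) :=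
                sumNorm_mul_le (fun α β => hnonneg _ _ α β) (fun α β => hnonneg _ _ α β)
            _ ≤ (∏ i ∈ Finset.Ico a c, sumNorm (Bc (hatn (i + 1)) (hatn i))) *
                  sumNorm (Bc (hatn (c + 1)) (hatn c)) :=
                mul_le_mul_of_nonneg_right (ih h) (sumNorm_nonneg _)
        · subst h
          rw [show Finset.Ico a (a + 1) = {a} by ext x; simp, Finset.prod_singleton]
    have hfac : ∀ i ∈ Finset.Ico a b, sumNorm (Bc (hatn (i + 1)) (hatn i)) ≤ C2 * N ^ ε' := by
      intro i hi
      rw [Finset.mem_Ico] at hi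
      refine (hCa2 i).trans (mul_le_mul_of_nonneg_left ?_ (by linarith))
      refine Real.rpow_le_rpow (sumNorm_nonneg _) ?_ (le_of_lt hε')
      exact sumNorm_mono (fun α β => hnonneg _ _ α β)
        (hmono (hatn i) n 0 0 (hni i hi.1 hi.2) (hatn_le i) le_rfl le_rfl)
    have hbase : (1 : ℝ) ≤ C2 * N ^ ε' := by
      have : (1 : ℝ) ≤ N ^ ε' := Real.one_le_rpow hN1 (le_of_lt hε')
      nlinarith
    calc sumNorm (Bc (hatn b) (hatn a))
        ≤ ∏ i ∈ Finset.Ico a b, sumNorm (Bc (hatn (i + 1)) (hatn i)) := tel b hab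
      _ ≤ ∏ _i ∈ Finset.Ico a b, (C2 * N ^ ε') :=
          Finset.prod_le_prod (fun i _ => sumNorm_nonneg _) hfac
      _ = (C2 * N ^ ε') ^ (b - a) := by rw [Finset.prod_const, Nat.card_Ico]
      _ ≤ (C2 * N ^ ε') ^ (K + 1) := pow_le_pow_right₀ hbase hba
      _ = C2 ^ (K + 1) * N ^ ε := by
          rw [mul_pow, ← Real.rpow_natCast (N ^ ε') (K + 1), ← Real.rpow_mul (le_of_lt hN0)]
          congr 1
          rw [hε'def]
          push_cast
          field_simp
  by_cases hcase : hatn (j + K) ≤ n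
  · -- case B : n lies within K accelerated steps of m
    set l := Nat.find (hex n) with hldef
    have hln : hatn l ≤ n := Nat.find_spec (hex n)
    have hlmin : ∀ i, i < l → n < hatn i := fun i hi =>
      lt_of_not_ge (Nat.find_min (hex n) hi)
    have hjl : j ≤ l := by
      by_contra h
      push_neg at h
      exact absurd (hln.trans hnm) (not_le_of_gt (hjmin l h))
    have hlK : l ≤ j + K := Nat.find_le hcase
    have hkey := key (j - 1) l (by omega) (by omega)
      (fun i _ hi2 => le_of_lt (hlmin i hi2))
    have h1 : sumNorm (Bc n m) ≤ sumNorm (Bc (hatn l) (hatn (j - 1))) :=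
      sumNorm_mono (fun α β => hnonneg _ _ α β)
        (hmono n (hatn l) m (hatn (j - 1)) hln hnm hmj1 (hatn_le _))
    have h2 : sumNorm (Bc m 0) ≤ N :=
      sumNorm_mono (fun α β => hnonneg _ _ α β)
        (hmono m n 0 0 hnm hm0 le_rfl le_rfl)
    have h3 : sumNorm (Bc n m) * sumNorm (Bc m 0) ≤ (C2 ^ (K + 1) * N ^ ε) * N :=
      mul_le_mul (h1.trans hkey) h2 (sumNorm_nonneg _) (by positivity)
    exact h3.trans (by
      rw [mul_assoc, hNε]
      have hb : (0 : ℝ) ≤ C2 ^ (K + 1) * N ^ (1 + ε) := by positivity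
      nlinarith)
  · -- case A : n is deeper than K accelerated steps past m
    push_neg at hcase
    have hnp : n ≤ hatn (j + K) := le_of_lt hcase
    have hpq : hatn (j + K) ≤ hatn j := hdec.antitone (by omega)
    have hqm : hatn j ≤ m := hjm
    have e1 : Bc n m = Bc (hatn (j + K)) m * Bc n (hatn (j + K)) :=
      hcoc n (hatn (j + K)) m hnp (hpq.trans hqm) hm0
    have h1 : sumNorm (Bc n m) ≤ sumNorm (Bc (hatn (j + K)) m) * sumNorm (Bc n (hatn (j + K))) := by
      rw [e1]
      exact sumNorm_mul_le (fun α β => hnonneg _ _ α β) (fun α β => hnonneg _ _ α β)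
    have h2 : sumNorm (Bc (hatn (j + K)) m) ≤ sumNorm (Bc (hatn (j + K)) (hatn (j - 1))) :=
      sumNorm_mono (fun α β => hnonneg _ _ α β)
        (hmono (hatn (j + K)) (hatn (j + K)) m (hatn (j - 1)) le_rfl (hpq.trans hqm) hmj1
          (hatn_le _))
    have hkey := key (j - 1) (j + K) (by omega) (by omega)
      (fun i _ hi2 => hnp.trans (hdec.antitone (by omega)))
    have h3 : sumNorm (Bc m 0) ≤ sumNorm (Bc (hatn j) 0) :=
      sumNorm_mono (fun α β => hnonneg _ _ α β)
        (hmono m (hatn j) 0 0 hqm hm0 le_rfl le_rfl)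
    have e2 : Bc n 0 = Bc (hatn j) 0 * Bc (hatn (j + K)) (hatn j) * Bc n (hatn (j + K)) := by
      rw [mul_assoc, ← hcoc n (hatn (j + K)) (hatn j) hnp hpq (hatn_le j),
        ← hcoc n (hatn j) 0 (hnp.trans hpq) (hatn_le j) le_rfl]
    have h4 : sumNorm (Bc (hatn j) 0) * sumNorm (Bc n (hatn (j + K))) ≤ N := by
      rw [hNdef, e2]
      exact sumNorm_pos_middle (fun α β => hnonneg _ _ α β) (fun α β => hpos j α β)
        (fun α β => hnonneg _ _ α β)
    calc sumNorm (Bc n m) * sumNorm (Bc m 0)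
        ≤ (sumNorm (Bc (hatn (j + K)) m) * sumNorm (Bc n (hatn (j + K)))) *
            sumNorm (Bc (hatn j) 0) :=
          mul_le_mul h1 h3 (sumNorm_nonneg _)
            (mul_nonneg (sumNorm_nonneg _) (sumNorm_nonneg _))
      _ = sumNorm (Bc (hatn (j + K)) m) * (sumNorm (Bc (hatn j) 0) * sumNorm (Bc n (hatn (j + K)))) := by
          ring
      _ ≤ (C2 ^ (K + 1) * N ^ ε) * N := by
          refine mul_le_mul (h2.trans hkey) h4 ?_ (by positivity)
          exact mul_nonneg (sumNorm_nonneg _) (sumNorm_nonneg _)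
      _ ≤ (d : ℝ) * C2 ^ (K + 1) * N ^ (1 + ε) := by
          rw [mul_assoc, hNε]
          have hb : (0 : ℝ) ≤ C2 ^ (K + 1) * N ^ (1 + ε) := by positivity
          nlinarith
end
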